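/- arXiv:1606.02750 — 2 statements merged into one kernel-verified Lean document; each statement's English description precedes it below -/
import Mathlib

section
/- Let λ, μ be real numbers with λ ≥ 1 and μ > 3, and let n be a natural number. Then for every z in the open unit disc 𝕌 the derivative (𝒲_{λ,μ})'_n(z) is nonzero and Re(𝒲'_{λ,μ}(z)/(𝒲_{λ,μ})'_n(z)) ≥ (μ−3)/(μ−1). -/
/-!
Write `𝒲'(z) = ∑ f m` with `f m = c_m z^m`, `c_0 = 1`. From `Γ(λm+μ) ≥ Γ(m+μ) ≥ μ^m Γ(μ)` and
`m + 1 ≤ 2 m!` we get `c_m ≤ 2 μ^{-m}`, so on the unit disc `∑_{m ≥ 1} ‖f m‖ ≤ 2/(μ-1) =: e < 1`.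
Splitting this sum into the head `h` (terms up to `n`) and tail `t`, the partial sum `P` satisfies
`‖P‖ ≥ 1 - h > 0` and `‖𝒲' - P‖ ≤ t ≤ e - h ≤ e (1 - h)`, hence `‖𝒲'/P - 1‖ ≤ e` and
`Re(𝒲'/P) ≥ 1 - e = (μ-3)/(μ-1)`.
-/

/-- The derivative of the normalized Wright function:
`𝒲'_{λ,μ}(z) = 1 + ∑_{m=1}^∞ (Γ(μ)(m+1)/(m! Γ(λm+μ))) z^m`. -/
noncomputable def normWrightDeriv (lam mu : ℝ) (z : ℂ) : ℂ :=
  ∑' m : ℕ,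
    ((Real.Gamma mu * (m + 1) / (Nat.factorial m * Real.Gamma (lam * m + mu)) : ℝ) : ℂ) * z ^ m

/-- The derivative of the `n`-th partial sum:
`(𝒲_{λ,μ})'_n(z) = 1 + ∑_{m=1}^n (Γ(μ)(m+1)/(m! Γ(λm+μ))) z^m`. -/
noncomputable def normWrightPartialDeriv (lam mu : ℝ) (n : ℕ) (z : ℂ) : ℂ :=
  ∑ m ∈ Finset.range (n + 1),
    ((Real.Gamma mu * (m + 1) / (Nat.factorial m * Real.Gamma (lam * m + mu)) : ℝ) : ℂ) * z ^ m

open Finset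

section PartialSums

variable {E : Type*} [NormedAddCommGroup E]

theorem norm_sub_sum_norm_le_norm_sum_range_succ (f : ℕ → E) (n : ℕ) :
    ‖f 0‖ - ∑ i ∈ range n, ‖f (i + 1)‖ ≤ ‖∑ i ∈ range (n + 1), f i‖ := by
  rw [sum_range_succ']
  have hsum := norm_sum_le (range n) fun i ↦ f (i + 1)
  have htri := norm_sub_norm_le (f 0) (-∑ i ∈ range n, f (i + 1))
  rw [norm_neg, sub_neg_eq_add, add_comm] at htri
  linarith

theorem norm_tsum_sub_sum_range_le [CompleteSpace E] {f : ℕ → E} (hf : Summable (‖f ·‖))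
    (n : ℕ) : ‖∑' i, f i - ∑ i ∈ range n, f i‖ ≤ ∑' i, ‖f (i + n)‖ := by
  rw [← (hf.of_norm).sum_add_tsum_nat_add n, add_sub_cancel_left]
  exact norm_tsum_le_tsum_norm ((summable_nat_add_iff n).2 hf)

end PartialSums

theorem re_tsum_div_sum_range_succ_ge {f : ℕ → ℂ} {e : ℝ} (hf0 : f 0 = 1)
    (hf : Summable (‖f ·‖)) (hfe : ∑' i, ‖f (i + 1)‖ ≤ e) (he : e < 1) (n : ℕ) :
    ∑ i ∈ range (n + 1), f i ≠ 0 ∧ 1 - e ≤ ((∑' i, f i) / ∑ i ∈ range (n + 1), f i).re := by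
  set P := ∑ i ∈ range (n + 1), f i
  set head := ∑ i ∈ range n, ‖f (i + 1)‖
  set tail := ∑' i, ‖f (i + (n + 1))‖
  have hsplit : head + tail = ∑' i, ‖f (i + 1)‖ := by
    simpa only [add_assoc, add_comm 1 n] using
      ((summable_nat_add_iff 1).2 hf).sum_add_tsum_nat_add n
  have head_nonneg : 0 ≤ head := sum_nonneg fun i _ ↦ norm_nonneg _
  have tail_nonneg : 0 ≤ tail := tsum_nonneg fun i ↦ norm_nonneg _
  have hP : 1 - head ≤ ‖P‖ := by
    simpa [hf0] using norm_sub_sum_norm_le_norm_sum_range_succ f n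
  have hPpos : 0 < ‖P‖ := by linarith
  refine ⟨norm_pos_iff.1 hPpos, ?_⟩
  have he0 : 0 ≤ e := (tsum_nonneg fun i ↦ norm_nonneg _).trans hfe
  have hquot : ‖(∑' i, f i) / P - 1‖ ≤ e := by
    rw [← div_self (norm_pos_iff.1 hPpos), ← sub_div, norm_div, div_le_iff₀ hPpos]
    calc ‖∑' i, f i - P‖ ≤ tail := norm_tsum_sub_sum_range_le hf (n + 1)
      _ ≤ e * (1 - head) := by nlinarith
      _ ≤ e * ‖P‖ := by gcongr
  have hre := Complex.abs_re_le_norm ((∑' i, f i) / P - 1)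
  rw [Complex.sub_re, Complex.one_re] at hre
  linarith [neg_abs_le (((∑' i, f i) / P).re - 1)]

theorem Real.pow_mul_Gamma_le_Gamma_nat_add {s : ℝ} (hs : 0 < s) (m : ℕ) :
    s ^ m * Real.Gamma s ≤ Real.Gamma (m + s) := by
  induction m with
  | zero => simp
  | succ m ih =>
    have hms : s ≤ m + s := by linarith [m.cast_nonneg (α := ℝ)]
    calc s ^ (m + 1) * Real.Gamma s = s * (s ^ m * Real.Gamma s) := by ring
      _ ≤ (m + s) * Real.Gamma (m + s) := by gcongr
      _ = Real.Gamma ((m + 1 : ℕ) + s) := by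
        rw [Nat.cast_succ, add_right_comm, Real.Gamma_add_one (by positivity)]

theorem Nat.succ_le_two_mul_factorial (m : ℕ) : m + 1 ≤ 2 * m.factorial := by
  rcases m.eq_zero_or_pos with rfl | hm
  · simp
  · linarith [m.self_le_factorial]

theorem summable_geometric_two_mul_inv {mu : ℝ} (hmu : 1 < mu) :
    Summable (fun m : ℕ ↦ 2 * mu⁻¹ ^ m) :=
  (summable_geometric_of_lt_one (by positivity) (inv_lt_one_of_one_lt₀ hmu)).mul_left 2

noncomputable def wrightDerivCoeff (lam mu : ℝ) (m : ℕ) : ℝ :=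
  Real.Gamma mu * (m + 1) / (Nat.factorial m * Real.Gamma (lam * m + mu))

section WrightDerivCoeff

variable {lam mu : ℝ}

theorem wrightDerivCoeff_zero (hmu : 0 < mu) : wrightDerivCoeff lam mu 0 = 1 := by
  simp [wrightDerivCoeff, (Real.Gamma_pos_of_pos hmu).ne']

theorem wrightDerivCoeff_nonneg (hlam : 0 ≤ lam) (hmu : 0 < mu) (m : ℕ) :
    0 ≤ wrightDerivCoeff lam mu m := by
  have : 0 < Real.Gamma (lam * m + mu) := Real.Gamma_pos_of_pos (by positivity)
  unfold wrightDerivCoeff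
  positivity

theorem wrightDerivCoeff_le (hlam : 1 ≤ lam) (hmu : 2 ≤ mu) (m : ℕ) :
    wrightDerivCoeff lam mu m ≤ 2 * mu⁻¹ ^ m := by
  have hm : (0 : ℝ) ≤ m := m.cast_nonneg
  have hΓmono : Real.Gamma (m + mu) ≤ Real.Gamma (lam * m + mu) :=
    Real.Gamma_strictMonoOn_Ici.monotoneOn (Set.mem_Ici.2 (by linarith))
      (Set.mem_Ici.2 (by nlinarith)) (by nlinarith)
  have hfact : ((m : ℝ) + 1) ≤ 2 * m.factorial := by exact_mod_cast m.succ_le_two_mul_factorial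
  rw [wrightDerivCoeff, div_le_iff₀ (by positivity)]
  calc Real.Gamma mu * (m + 1) = mu⁻¹ ^ m * ((m + 1) * (mu ^ m * Real.Gamma mu)) := by
        rw [inv_pow]
        field_simp
    _ ≤ mu⁻¹ ^ m * ((2 * m.factorial) * Real.Gamma (lam * m + mu)) := by
        gcongr
        exact (Real.pow_mul_Gamma_le_Gamma_nat_add (by linarith) m).trans hΓmono
    _ = 2 * mu⁻¹ ^ m * (m.factorial * Real.Gamma (lam * m + mu)) := by ring

theorem norm_wrightDerivCoeff_mul_pow_le (hlam : 1 ≤ lam) (hmu : 2 ≤ mu) {z : ℂ} (hz : ‖z‖ ≤ 1)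
    (m : ℕ) : ‖(wrightDerivCoeff lam mu m : ℂ) * z ^ m‖ ≤ 2 * mu⁻¹ ^ m := by
  rw [norm_mul, norm_pow, Complex.norm_real, Real.norm_of_nonneg
    (wrightDerivCoeff_nonneg (by linarith) (by linarith) m)]
  calc wrightDerivCoeff lam mu m * ‖z‖ ^ m ≤ wrightDerivCoeff lam mu m * 1 := by
        gcongr
        · exact wrightDerivCoeff_nonneg (by linarith) (by linarith) m
        · exact pow_le_one₀ (norm_nonneg z) hz
    _ ≤ 2 * mu⁻¹ ^ m := by simpa using wrightDerivCoeff_le hlam hmu m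

theorem summable_norm_wrightDerivCoeff_mul_pow (hlam : 1 ≤ lam) (hmu : 2 ≤ mu)
    {z : ℂ} (hz : ‖z‖ ≤ 1) : Summable (fun m ↦ ‖(wrightDerivCoeff lam mu m : ℂ) * z ^ m‖) :=
  (summable_geometric_two_mul_inv (by linarith)).of_nonneg_of_le (fun m ↦ norm_nonneg _)
    (norm_wrightDerivCoeff_mul_pow_le hlam hmu hz)

theorem tsum_norm_wrightDerivCoeff_mul_pow_succ_le (hlam : 1 ≤ lam) (hmu : 2 ≤ mu)
    {z : ℂ} (hz : ‖z‖ ≤ 1) :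
    ∑' m, ‖(wrightDerivCoeff lam mu (m + 1) : ℂ) * z ^ (m + 1)‖ ≤ 2 / (mu - 1) := by
  calc ∑' m, ‖(wrightDerivCoeff lam mu (m + 1) : ℂ) * z ^ (m + 1)‖
      ≤ ∑' m : ℕ, 2 * mu⁻¹ ^ (m + 1) :=
        Summable.tsum_le_tsum (fun m ↦ norm_wrightDerivCoeff_mul_pow_le hlam hmu hz (m + 1))
          ((summable_nat_add_iff 1).2 (summable_norm_wrightDerivCoeff_mul_pow hlam hmu hz))
          ((summable_nat_add_iff 1).2 (summable_geometric_two_mul_inv (by linarith)))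
    _ = 2 * mu⁻¹ * ∑' m : ℕ, mu⁻¹ ^ m := by
        rw [← tsum_mul_left]
        exact tsum_congr fun m ↦ by ring
    _ = 2 / (mu - 1) := by
        rw [tsum_geometric_of_lt_one (by positivity) (inv_lt_one_of_one_lt₀ (by linarith))]
        field_simp

end WrightDerivCoeff

/-- If `λ ≥ 1` and `μ > 3`, then on the open unit disc `(𝒲_{λ,μ})'_n` is nonzero and
`Re(𝒲'_{λ,μ}(z)/(𝒲_{λ,μ})'_n(z)) ≥ (μ-3)/(μ-1)`. -/
theorem re_normWrightDeriv_div_partialDeriv (lam mu : ℝ) (hlam : 1 ≤ lam) (hmu : 3 < mu)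
    (n : ℕ) :
    ∀ z : ℂ, ‖z‖ < 1 →
      normWrightPartialDeriv lam mu n z ≠ 0 ∧
      (mu - 3) / (mu - 1) ≤
        (normWrightDeriv lam mu z / normWrightPartialDeriv lam mu n z).re := by
  intro z hz
  have hmu2 : 2 ≤ mu := by linarith
  have hmu1 : 0 < mu - 1 := by linarith
  have hrhs : (mu - 3) / (mu - 1) = 1 - 2 / (mu - 1) := by
    field_simp
    ring
  have he : 2 / (mu - 1) < 1 := by rw [div_lt_one hmu1]; linarith
  rw [hrhs]
  exact re_tsum_div_sum_range_succ_ge (by simp [wrightDerivCoeff_zero (by linarith : 0 < mu)])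
    (summable_norm_wrightDerivCoeff_mul_pow hlam hmu2 hz.le)
    (tsum_norm_wrightDerivCoeff_mul_pow_succ_le hlam hmu2 hz.le) he n
end

section
/- Let λ, μ be real numbers with λ ≥ 1 and μ > 1, and let n be a natural number. Then for every z in the open unit disc 𝕌 the function 𝔸[𝒲_{λ,μ}](z) is nonzero for z ≠ 0 and Re((𝔸[𝒲_{λ,μ}])_n(z)/𝔸[𝒲_{λ,μ}](z)) ≥ (2μ−1)/(2μ), where at z = 0 the ratio is understood as its analytic extension with value 1. -/
/-!
Write `𝔸[𝒲_{λ,μ}](z) = z + s + t`, where `s` collects the terms of degree `2, …, n + 1` and `t`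
is the tail. Since `(m + 1)! ≥ 2 ^ m` and `Γ(λm + μ) ≥ μ ^ m Γ(μ)`, the `m`-th term is bounded by
`|z| (|z| / 2μ) ^ m`, so a geometric series gives `(2μ - 1)(‖s‖ + ‖t‖) < |z|`. This forces
`‖μ t‖ ≤ ‖𝔸[𝒲_{λ,μ}](z) - μ t‖`, i.e. `Re (μ t / 𝔸[𝒲_{λ,μ}](z)) ≤ 1/2`, and the partial sum
divided by the full sum is `1 - t / 𝔸[𝒲_{λ,μ}](z)`.
-/

/-- The Alexander transform of the normalized Wright function:
`𝔸[𝒲_{λ,μ}](z) = z + ∑_{m=1}^∞ (Γ(μ)/((m+1)! Γ(λm+μ))) z^{m+1}`. -/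
noncomputable def alexNormWright (lam mu : ℝ) (z : ℂ) : ℂ :=
  ∑' m : ℕ,
    ((Real.Gamma mu / (Nat.factorial (m + 1) * Real.Gamma (lam * m + mu)) : ℝ) : ℂ) * z ^ (m + 1)

/-- The `n`-th partial sum
`(𝔸[𝒲_{λ,μ}])_n(z) = z + ∑_{m=1}^n (Γ(μ)/((m+1)! Γ(λm+μ))) z^{m+1}`. -/
noncomputable def alexNormWrightPartial (lam mu : ℝ) (n : ℕ) (z : ℂ) : ℂ :=
  ∑ m ∈ Finset.range (n + 1),
    ((Real.Gamma mu / (Nat.factorial (m + 1) * Real.Gamma (lam * m + mu)) : ℝ) : ℂ) * z ^ (m + 1)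

open Finset

lemma re_le_half_of_norm_le_norm_one_sub {w : ℂ} (h : ‖w‖ ≤ ‖1 - w‖) : w.re ≤ 1 / 2 := by
  have hsq := pow_le_pow_left₀ (norm_nonneg w) h 2
  rw [Complex.sq_norm, Complex.sq_norm, Complex.normSq_apply, Complex.normSq_apply] at hsq
  simp only [Complex.sub_re, Complex.sub_im, Complex.one_re, Complex.one_im] at hsq
  nlinarith

lemma re_div_le_inv_two_mul_of_norm_le {μ : ℝ} (hμ : 0 < μ) {t f : ℂ} (hf : f ≠ 0)
    (h : μ * ‖t‖ ≤ ‖f - μ * t‖) : (t / f).re ≤ (2 * μ)⁻¹ := by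
  have hw : ‖(μ * t / f : ℂ)‖ ≤ ‖1 - μ * t / f‖ := by
    rw [one_sub_div hf, norm_div, norm_div, norm_mul, Complex.norm_real, Real.norm_of_nonneg hμ.le]
    gcongr
  have hre := re_le_half_of_norm_le_norm_one_sub hw
  rw [mul_div_assoc, Complex.re_ofReal_mul] at hre
  rw [← one_div, le_div_iff₀ (by positivity)]
  linarith

section Perturbation

variable {μ : ℝ} {z s t : ℂ}

lemma add_add_ne_zero_of_norm_lt (hμ : 1 ≤ μ) (h : (2 * μ - 1) * (‖s‖ + ‖t‖) < ‖z‖) :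
    z + s + t ≠ 0 := by
  have hst : ‖s‖ + ‖t‖ < ‖z‖ := by nlinarith [norm_nonneg s, norm_nonneg t]
  have hz : ‖z‖ ≤ ‖z + s + t‖ + ‖s‖ + ‖t‖ := by
    calc ‖z‖ = ‖(z + s + t) - (s + t)‖ := by ring_nf
      _ ≤ ‖z + s + t‖ + ‖s‖ + ‖t‖ :=
        (norm_sub_le _ _).trans (by linarith [norm_add_le s t])
  rw [← norm_pos_iff]
  linarith

lemma le_re_add_div_add_add_of_norm_lt (hμ : 1 ≤ μ) (h : (2 * μ - 1) * (‖s‖ + ‖t‖) < ‖z‖) :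
    (2 * μ - 1) / (2 * μ) ≤ ((z + s) / (z + s + t)).re := by
  have hf := add_add_ne_zero_of_norm_lt hμ h
  have hnorm : ‖((μ - 1 : ℝ) : ℂ) * t‖ = (μ - 1) * ‖t‖ := by
    rw [norm_mul, Complex.norm_real, Real.norm_of_nonneg (by linarith)]
  have hz : ‖z‖ ≤ ‖z + s + t - μ * t‖ + ‖s‖ + (μ - 1) * ‖t‖ := by
    calc ‖z‖ = ‖(z + s + t - μ * t) - s + ((μ - 1 : ℝ) : ℂ) * t‖ := by push_cast; ring_nf
      _ ≤ ‖z + s + t - μ * t‖ + ‖s‖ + ‖((μ - 1 : ℝ) : ℂ) * t‖ :=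
        (norm_add_le _ _).trans (add_le_add_left (norm_sub_le _ _) _)
      _ = _ := by rw [hnorm]
  have hkey : μ * ‖t‖ ≤ ‖z + s + t - μ * t‖ := by
    nlinarith [norm_nonneg s, norm_nonneg t]
  have htail := re_div_le_inv_two_mul_of_norm_le (by linarith) hf hkey
  have hratio : (z + s) / (z + s + t) = 1 - t / (z + s + t) := by
    rw [eq_sub_iff_add_eq, ← add_div, div_self hf]
  rw [hratio, Complex.sub_re, Complex.one_re, sub_div, div_self (by linarith), one_div]
  linarith

end Perturbation

lemma norm_sum_range_add_norm_tsum_nat_add_le {E : Type*} [SeminormedAddCommGroup E]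
    {f : ℕ → E} (hf : Summable (‖f ·‖)) (n : ℕ) :
    ‖∑ i ∈ range n, f i‖ + ‖∑' i, f (i + n)‖ ≤ ∑' i, ‖f i‖ := by
  rw [← hf.sum_add_tsum_nat_add n]
  exact add_le_add (norm_sum_le _ _)
    (norm_tsum_le_tsum_norm ((summable_nat_add_iff n).2 hf))

theorem le_re_sum_range_div_tsum_of_norm_le_geometric {a : ℕ → ℂ} {μ q : ℝ} (hμ : 1 ≤ μ)
    (hq : 0 ≤ q) (hμq : 2 * μ * q < 1) (ha0 : a 0 ≠ 0) (ha : ∀ m, ‖a m‖ ≤ ‖a 0‖ * q ^ m)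
    (n : ℕ) :
    ∑' m, a m ≠ 0 ∧ (2 * μ - 1) / (2 * μ) ≤ ((∑ m ∈ range (n + 1), a m) / ∑' m, a m).re := by
  have hq1 : q < 1 := by nlinarith
  have hgeom : Summable fun m ↦ ‖a 0‖ * q ^ m :=
    (summable_geometric_of_lt_one hq hq1).mul_left _
  have hnorm : Summable (‖a ·‖) := hgeom.of_nonneg_of_le (fun _ ↦ norm_nonneg _) ha
  have hnorm_succ : Summable fun m ↦ ‖a (m + 1)‖ := (summable_nat_add_iff 1).2 hnorm
  have hpartial : ∑ m ∈ range (n + 1), a m = a 0 + ∑ m ∈ range n, a (m + 1) := by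
    rw [sum_range_succ', add_comm]
  have hfull : ∑' m, a m = a 0 + ∑ m ∈ range n, a (m + 1) + ∑' m, a (m + (n + 1)) := by
    rw [← hpartial, (hnorm.of_norm).sum_add_tsum_nat_add]
  have htail : ∑' m, ‖a (m + 1)‖ ≤ ‖a 0‖ * q * (1 - q)⁻¹ := by
    calc ∑' m, ‖a (m + 1)‖ ≤ ∑' m, ‖a 0‖ * q * q ^ m :=
          hnorm_succ.tsum_le_tsum (fun m ↦ (ha (m + 1)).trans_eq (by ring))
            ((summable_geometric_of_lt_one hq hq1).mul_left _)
      _ = ‖a 0‖ * q * (1 - q)⁻¹ := by rw [tsum_mul_left, tsum_geometric_of_lt_one hq hq1]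
  have hlt : (2 * μ - 1) * (‖a 0‖ * q * (1 - q)⁻¹) < ‖a 0‖ := by
    rw [← mul_assoc, ← div_eq_mul_inv, div_lt_iff₀ (by linarith)]
    nlinarith [mul_lt_mul_of_pos_left hμq (norm_pos_iff.2 ha0)]
  have hst : (2 * μ - 1) * (‖∑ m ∈ range n, a (m + 1)‖ + ‖∑' m, a (m + (n + 1))‖) < ‖a 0‖ :=
    lt_of_le_of_lt (mul_le_mul_of_nonneg_left
      ((norm_sum_range_add_norm_tsum_nat_add_le hnorm_succ n).trans htail) (by linarith)) hlt
  rw [hpartial, hfull]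
  exact ⟨add_add_ne_zero_of_norm_lt hμ hst, le_re_add_div_add_add_of_norm_lt hμ hst⟩

lemma pow_mul_Gamma_le_Gamma_add_nat {x : ℝ} (hx : 0 < x) (m : ℕ) :
    x ^ m * Real.Gamma x ≤ Real.Gamma (x + m) := by
  induction m with
  | zero => simp
  | succ k ih =>
    have hxk : 0 < x + k := by positivity
    rw [Nat.cast_succ, ← add_assoc, Real.Gamma_add_one hxk.ne', pow_succ', mul_assoc]
    exact mul_le_mul (by linarith [k.cast_nonneg (α := ℝ)]) ih (by positivity) hxk.le

lemma pow_mul_Gamma_le_Gamma_mul_add {lam mu : ℝ} (hlam : 1 ≤ lam) (hmu : 1 ≤ mu) (m : ℕ) :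
    mu ^ m * Real.Gamma mu ≤ Real.Gamma (lam * m + mu) := by
  rcases Nat.eq_zero_or_pos m with rfl | hm
  · simp
  have hm1 : (1 : ℝ) ≤ m := by exact_mod_cast hm
  refine (pow_mul_Gamma_le_Gamma_add_nat (by linarith) m).trans ?_
  -- `Real.Gamma_strictMonoOn_Ici` needs both arguments `≥ 2`, hence the split at `m = 0`.
  exact Real.Gamma_strictMonoOn_Ici.monotoneOn (Set.mem_Ici.2 (by linarith))
    (Set.mem_Ici.2 (by nlinarith)) (by nlinarith)

noncomputable def alexNormWrightCoeff (lam mu : ℝ) (m : ℕ) : ℝ :=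
  Real.Gamma mu / (Nat.factorial (m + 1) * Real.Gamma (lam * m + mu))

section Coeff

variable {lam mu : ℝ}

lemma alexNormWrightCoeff_zero (hmu : 0 < mu) : alexNormWrightCoeff lam mu 0 = 1 := by
  simp [alexNormWrightCoeff, (Real.Gamma_pos_of_pos hmu).ne']

lemma alexNormWrightCoeff_nonneg (hlam : 0 ≤ lam) (hmu : 0 < mu) (m : ℕ) :
    0 ≤ alexNormWrightCoeff lam mu m := by
  have := Real.Gamma_pos_of_pos hmu
  have := Real.Gamma_pos_of_pos (show 0 < lam * m + mu by positivity)
  unfold alexNormWrightCoeff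
  positivity

lemma alexNormWrightCoeff_le (hlam : 1 ≤ lam) (hmu : 1 ≤ mu) (m : ℕ) :
    alexNormWrightCoeff lam mu m ≤ ((2 * mu) ^ m)⁻¹ := by
  have hΓ := Real.Gamma_pos_of_pos (show 0 < mu by linarith)
  have hfact : (2 : ℝ) ^ m ≤ (m + 1).factorial := by
    have := Nat.factorial_mul_pow_le_factorial (m := 1) (n := m)
    rw [Nat.factorial_one, one_mul, one_add_one_eq_two, add_comm] at this
    exact_mod_cast this
  calc alexNormWrightCoeff lam mu m
      ≤ Real.Gamma mu / (2 ^ m * (mu ^ m * Real.Gamma mu)) :=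
        div_le_div_of_nonneg_left hΓ.le (by positivity)
          (mul_le_mul hfact (pow_mul_Gamma_le_Gamma_mul_add hlam hmu m) (by positivity)
            (by positivity))
    _ = ((2 * mu) ^ m)⁻¹ := by field_simp; ring

lemma norm_alexNormWrightCoeff_mul_pow_le (hlam : 1 ≤ lam) (hmu : 1 ≤ mu) (z : ℂ) (m : ℕ) :
    ‖(alexNormWrightCoeff lam mu m : ℂ) * z ^ (m + 1)‖ ≤ ‖z‖ * (‖z‖ / (2 * mu)) ^ m := by
  rw [norm_mul, Complex.norm_real,
    Real.norm_of_nonneg (alexNormWrightCoeff_nonneg (by linarith) (by linarith) m), norm_pow,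
    div_pow, pow_succ', div_eq_inv_mul, mul_left_comm]
  gcongr
  exact alexNormWrightCoeff_le hlam hmu m

end Coeff

/-- If `λ ≥ 1` and `μ > 1`, then on the open unit disc `𝔸[𝒲_{λ,μ}]` is nonzero away
from `0`, and `Re((𝔸[𝒲_{λ,μ}])_n(z)/𝔸[𝒲_{λ,μ}](z)) ≥ (2μ-1)/(2μ)`, the ratio being
understood as its analytic extension, with value `1`, at `z = 0`. -/
theorem re_partial_div_alexNormWright (lam mu : ℝ) (hlam : 1 ≤ lam) (hmu : 1 < mu) (n : ℕ) :
    ∀ z : ℂ, ‖z‖ < 1 →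
      (z ≠ 0 → alexNormWright lam mu z ≠ 0) ∧
      (2 * mu - 1) / (2 * mu) ≤
        (if z = 0 then (1 : ℂ)
          else alexNormWrightPartial lam mu n z / alexNormWright lam mu z).re := by
  intro z hz
  by_cases hz0 : z = 0
  · subst hz0
    simp only [ne_eq, not_true_eq_false, IsEmpty.forall_iff, if_true, Complex.one_re, true_and]
    exact div_le_one_of_le₀ (by linarith) (by linarith)
  have hterm0 : (alexNormWrightCoeff lam mu 0 : ℂ) * z ^ (0 + 1) = z := by
    simp [alexNormWrightCoeff_zero (by linarith : 0 < mu)]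
  have hbound := le_re_sum_range_div_tsum_of_norm_le_geometric
    (a := fun m ↦ (alexNormWrightCoeff lam mu m : ℂ) * z ^ (m + 1)) (q := ‖z‖ / (2 * mu))
    hmu.le (by positivity) (by rw [mul_div_cancel₀ _ (by positivity)]; exact hz) (by rwa [hterm0])
    (fun m ↦ by rw [hterm0]; exact norm_alexNormWrightCoeff_mul_pow_le hlam hmu.le z m) n
  exact ⟨fun _ ↦ hbound.1, by rw [if_neg hz0]; exact hbound.2⟩
end
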